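/- Let the discrete NEP be 2-groups partitionable with X nonempty and bounded. Initialize x⁰ by x⁰^ν_i = l^ν_i for (ν,i) ∈ G₁ and x⁰^ν_i = u^ν_i for (ν,i) ∈ G₂, and run the Jacobi-type best-response method where each player plays at least once every h iterations and ties among best responses are broken so that G₁-coordinates never decrease and G₂-coordinates never increase. Then the method converges in a finite number of iterations to an equilibrium of the discrete NEP; moreover the generated sequence is coordinatewise monotone: x^{k+1,ν}_i ≥ x^{k,ν}_i for (ν,i) ∈ G₁ and x^{k+1,ν}_i ≤ x^{k,ν}_i for (ν,i) ∈ G₂. -/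

import Mathlib

set_option linter.unusedSectionVars false
set_option linter.unusedVariables false
set_option linter.unnecessarySeqFocus false
set_option linter.unusedTactic false
set_option maxHeartbeats 1000000


open Finset

variable {ι I : Type*}

/-- Objective of player `ν` in a 2-groups partitionable discrete NEP
(flattened variables): `θ_ν(x) = Σ_i ϑ_i(x_i) + (1/2)xᵛᵀQᵛxᵛ + Θ^O(x⁻ᵛ)ᵀxᵛ`. -/
noncomputable def tgObj [Fintype I] [DecidableEq ι]
    (player : I → ι) (ϑ : I → ℝ → ℝ) (Q : I → I → ℝ)
    (Θ : I → (I → ℝ) → ℝ) (ν : ι) (x : I → ℝ) : ℝ :=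
  (∑ i ∈ univ.filter (fun i => player i = ν), (ϑ i (x i) + Θ i x * x i))
  + (1 / 2) * ∑ i ∈ univ.filter (fun i => player i = ν),
      ∑ j ∈ univ.filter (fun j => player j = ν), Q i j * x i * x j

/-- Discrete Nash equilibrium of the 2-groups partitionable game. -/
def tgIsEq [Fintype I] [DecidableEq ι]
    (player : I → ι) (ϑ : I → ℝ → ℝ) (Q : I → I → ℝ)
    (Θ : I → (I → ℝ) → ℝ) (l u : I → ℤ) (x : I → ℤ) : Prop :=
  (∀ j, l j ≤ x j ∧ x j ≤ u j) ∧
  ∀ ν, ∀ y : I → ℤ, (∀ j, l j ≤ y j ∧ y j ≤ u j) →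
    (∀ j, player j ≠ ν → y j = x j) →
    tgObj player ϑ Q Θ ν (fun t => (x t : ℝ)) ≤ tgObj player ϑ Q Θ ν (fun t => (y t : ℝ))

section Lattice
variable [Fintype I]

def vle (G : I → Bool) (x y : I → ℤ) : Prop :=
  ∀ i, (G i = true → x i ≤ y i) ∧ (G i = false → y i ≤ x i)

def vsup (G : I → Bool) (x y : I → ℤ) : I → ℤ :=
  fun i => if G i then max (x i) (y i) else min (x i) (y i)

def vinf (G : I → Bool) (x y : I → ℤ) : I → ℤ :=
  fun i => if G i then min (x i) (y i) else max (x i) (y i)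

def inBox (l u : I → ℤ) (x : I → ℤ) : Prop := ∀ j, l j ≤ x j ∧ x j ≤ u j

lemma vle_refl (G : I → Bool) (x : I → ℤ) : vle G x x := fun i => ⟨fun _ => le_refl _, fun _ => le_refl _⟩

lemma vle_trans {G : I → Bool} {x y z : I → ℤ} (h1 : vle G x y) (h2 : vle G y z) : vle G x z :=
  fun i => ⟨fun hg => le_trans ((h1 i).1 hg) ((h2 i).1 hg),
            fun hg => le_trans ((h2 i).2 hg) ((h1 i).2 hg)⟩

lemma vle_vsup_left (G : I → Bool) (x y : I → ℤ) : vle G x (vsup G x y) := by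
  intro i; unfold vsup
  constructor <;> intro hg <;> simp [hg]

lemma vle_vsup_right (G : I → Bool) (x y : I → ℤ) : vle G y (vsup G x y) := by
  intro i; unfold vsup
  constructor <;> intro hg <;> simp [hg]

lemma vinf_vle_left (G : I → Bool) (x y : I → ℤ) : vle G (vinf G x y) x := by
  intro i; unfold vinf
  constructor <;> intro hg <;> simp [hg]

lemma vinf_vle_right (G : I → Bool) (x y : I → ℤ) : vle G (vinf G x y) y := by
  intro i; unfold vinf
  constructor <;> intro hg <;> simp [hg]

lemma vsup_inBox {l u : I → ℤ} {x y : I → ℤ} (hx : inBox l u x) (hy : inBox l u y) :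
    inBox l u (vsup G x y) := by
  intro j; unfold vsup
  rcases hx j with ⟨h1, h2⟩; rcases hy j with ⟨h3, h4⟩
  by_cases hg : G j = true <;> simp [hg] <;> omega

lemma vinf_inBox {l u : I → ℤ} {x y : I → ℤ} (hx : inBox l u x) (hy : inBox l u y) :
    inBox l u (vinf G x y) := by
  intro j; unfold vinf
  rcases hx j with ⟨h1, h2⟩; rcases hy j with ⟨h3, h4⟩
  by_cases hg : G j = true <;> simp [hg] <;> omega

def phiG (G : I → Bool) (x : I → ℤ) : ℤ := ∑ i, (if G i then x i else - x i)

lemma phiG_mono {G : I → Bool} {x y : I → ℤ} (h : vle G x y) : phiG G x ≤ phiG G y := by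
  apply Finset.sum_le_sum
  intro i _
  rcases h i with ⟨h1, h2⟩
  by_cases hg : G i = true <;> simp [hg] at h1 h2 ⊢
  · exact h1
  · simpa using h2

lemma eq_of_vle_of_phi_le {G : I → Bool} {x y : I → ℤ} (h : vle G x y)
    (hφ : phiG G y ≤ phiG G x) : x = y := by
  have hsum : ∑ i, ((if G i then y i else - y i) - (if G i then x i else - x i)) = 0 := by
    have : phiG G y - phiG G x = 0 := le_antisymm (by omega) (by
      have := phiG_mono h; omega)
    unfold phiG at this
    rw [Finset.sum_sub_distrib]; omega
  have hnn : ∀ i ∈ Finset.univ, (0:ℤ) ≤ (if G i then y i else - y i) - (if G i then x i else - x i) := by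
    intro i _
    rcases h i with ⟨h1, h2⟩
    by_cases hg : G i = true <;> simp [hg] at h1 h2 ⊢ <;> omega
  have := (Finset.sum_eq_zero_iff_of_nonneg hnn).mp hsum
  funext i
  have := this i (Finset.mem_univ i)
  rcases h i with ⟨h1, h2⟩
  by_cases hg : G i = true <;> simp [hg] at this ⊢ <;> omega

lemma vsup_eq_of_vle {G : I → Bool} {x y : I → ℤ} (h : vle G x y) : vsup G x y = y := by
  funext i
  rcases h i with ⟨h1, h2⟩
  unfold vsup
  by_cases hg : G i = true <;> simp [hg] at h1 h2 ⊢ <;> omega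

end Lattice



def inBoxR (l u : I → ℤ) (x : I → ℝ) : Prop := ∀ t, (l t : ℝ) ≤ x t ∧ x t ≤ (u t : ℝ)

section Theta
variable [Fintype I] [DecidableEq I] [DecidableEq ι]

lemma update_differentiable (w : I → ℝ) (a : I) :
    Differentiable ℝ (fun s : ℝ => Function.update w a s) := by
  have he : (fun s : ℝ => Function.update w a s)
      = fun s => w + (s - w a) • (Pi.single a (1:ℝ) : I → ℝ) := by
    funext s j
    by_cases hj : j = a
    · subst hj; simp
    · simp [Function.update_of_ne hj, Pi.single_apply, hj]
  rw [he]
  apply Differentiable.const_add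
  exact (differentiable_id.sub_const _).smul_const _

lemma theta_coord (player : I → ι) (l u : I → ℤ) (Θ : I → (I → ℝ) → ℝ)
    (hΘdiff : ∀ i, Differentiable ℝ (Θ i)) (G : I → Bool)
    (hΘsign : ∀ i j, player i ≠ player j → ∀ x : I → ℝ,
      (∀ t, (l t : ℝ) ≤ x t ∧ x t ≤ (u t : ℝ)) →
      ((G i = G j → deriv (fun s => Θ i (Function.update x j s)) (x j) ≤ 0) ∧
       (G i ≠ G j → 0 ≤ deriv (fun s => Θ i (Function.update x j s)) (x j))))
    (i a : I) (hia : player i ≠ player a)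
    (w : I → ℝ) (hw : ∀ t, t ≠ a → (l t : ℝ) ≤ w t ∧ w t ≤ (u t : ℝ))
    (t t' : ℝ) (ht : (l a : ℝ) ≤ t ∧ t ≤ (u a : ℝ)) (ht' : (l a : ℝ) ≤ t' ∧ t' ≤ (u a : ℝ))
    (htt' : t ≤ t') :
    (G i = G a → Θ i (Function.update w a t') ≤ Θ i (Function.update w a t)) ∧
    (G i ≠ G a → Θ i (Function.update w a t) ≤ Θ i (Function.update w a t')) := by
  set g : ℝ → ℝ := fun s => Θ i (Function.update w a s) with hg
  have hgd : Differentiable ℝ g := (hΘdiff i).comp (update_differentiable w a)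
  have hbox : ∀ τ : ℝ, τ ∈ Set.Icc t t' → inBoxR l u (Function.update w a τ) := by
    intro τ hτ s
    by_cases hs : s = a
    · subst hs; simp only [Function.update_self]
      exact ⟨le_trans ht.1 hτ.1, le_trans hτ.2 ht'.2⟩
    · rw [Function.update_of_ne hs]; exact hw s hs
  have hderiv : ∀ τ ∈ Set.Icc t t',
      (G i = G a → deriv g τ ≤ 0) ∧ (G i ≠ G a → 0 ≤ deriv g τ) := by
    intro τ hτ
    have hb := hbox τ hτ
    have := hΘsign i a hia (Function.update w a τ) hb
    have heq : (fun s => Θ i (Function.update (Function.update w a τ) a s)) = g := by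
      funext s; rw [Function.update_idem]
    rw [heq, Function.update_self] at this
    exact this
  constructor
  · intro hGG
    have hanti : AntitoneOn g (Set.Icc t t') := by
      apply antitoneOn_of_deriv_nonpos (convex_Icc t t') hgd.continuous.continuousOn
        hgd.differentiableOn
      intro τ hτ
      exact (hderiv τ (interior_subset hτ)).1 hGG
    exact hanti (Set.left_mem_Icc.mpr htt') (Set.right_mem_Icc.mpr htt') htt'
  · intro hGG
    have hmono : MonotoneOn g (Set.Icc t t') := by
      apply monotoneOn_of_deriv_nonneg (convex_Icc t t') hgd.continuous.continuousOn
        hgd.differentiableOn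
      intro τ hτ
      exact (hderiv τ (interior_subset hτ)).2 hGG
    exact hmono (Set.left_mem_Icc.mpr htt') (Set.right_mem_Icc.mpr htt') htt'

lemma theta_mono (player : I → ι) (l u : I → ℤ) (Θ : I → (I → ℝ) → ℝ)
    (hΘdep : ∀ i (x y : I → ℝ),
      (∀ j, player j ≠ player i → x j = y j) → Θ i x = Θ i y)
    (hΘdiff : ∀ i, Differentiable ℝ (Θ i)) (G : I → Bool)
    (hΘsign : ∀ i j, player i ≠ player j → ∀ x : I → ℝ,
      (∀ t, (l t : ℝ) ≤ x t ∧ x t ≤ (u t : ℝ)) →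
      ((G i = G j → deriv (fun s => Θ i (Function.update x j s)) (x j) ≤ 0) ∧
       (G i ≠ G j → 0 ≤ deriv (fun s => Θ i (Function.update x j s)) (x j))))
    (i : I) (x y : I → ℝ) (hx : inBoxR l u x) (hy : inBoxR l u y)
    (hxy : ∀ j, (G j = true → x j ≤ y j) ∧ (G j = false → y j ≤ x j)) :
    (G i = true → Θ i y ≤ Θ i x) ∧ (G i = false → Θ i x ≤ Θ i y) := by
  classical
  have key : ∀ s : Finset I,
      (G i = true → Θ i (fun j => if j ∈ s then y j else x j) ≤ Θ i x) ∧
      (G i = false → Θ i x ≤ Θ i (fun j => if j ∈ s then y j else x j)) := by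
    intro s
    induction s using Finset.induction_on with
    | empty => simp
    | @insert a s ha ih =>
      set w : I → ℝ := fun j => if j ∈ s then y j else x j with hwdef
      have hnew : (fun j => if j ∈ insert a s then y j else x j)
          = Function.update w a (y a) := by
        funext j
        by_cases hj : j = a
        · subst hj; simp
        · simp [Function.update_of_ne hj, Finset.mem_insert, hj, hwdef]
      have hwa : w a = x a := by simp [hwdef, ha]
      have hwold : w = Function.update w a (x a) := by
        funext j
        by_cases hj : j = a
        · subst hj; simp [hwa]
        · rw [Function.update_of_ne hj]
      have hwbox : ∀ t, t ≠ a → (l t : ℝ) ≤ w t ∧ w t ≤ (u t : ℝ) := by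
        intro t _
        by_cases hts : t ∈ s <;> simp only [hwdef, hts, if_true, if_false]
        · exact hy t
        · exact hx t
      rw [hnew]
      by_cases hpa : player a = player i
      · -- Θ i doesn't depend on coordinate a
        have heq : Θ i (Function.update w a (y a)) = Θ i w := by
          apply hΘdep
          intro j hj
          have hja : j ≠ a := fun hh => hj (hh ▸ hpa)
          rw [Function.update_of_ne hja]
        rw [heq]; exact ih
      · have hia : player i ≠ player a := fun hh => hpa hh.symm
        rcases hxy a with ⟨hxy1, hxy2⟩
        by_cases hGa : G a = true
        · -- x a ≤ y a
          have hord := hxy1 hGa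
          have hc := theta_coord player l u Θ hΘdiff G hΘsign i a hia w hwbox
            (x a) (y a) (hx a) (hy a) hord
          constructor
          · intro hGi
            have : Θ i (Function.update w a (y a)) ≤ Θ i (Function.update w a (x a)) :=
              hc.1 (by rw [hGi, hGa])
            rw [← hwold] at this
            exact le_trans this (ih.1 hGi)
          · intro hGi
            have : Θ i (Function.update w a (x a)) ≤ Θ i (Function.update w a (y a)) :=
              hc.2 (by rw [hGi, hGa]; simp)
            rw [← hwold] at this
            exact le_trans (ih.2 hGi) this
        · -- y a ≤ x a
          have hGa' : G a = false := by
            cases hh : G a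
            · rfl
            · exact absurd hh hGa
          have hord := hxy2 hGa'
          have hc := theta_coord player l u Θ hΘdiff G hΘsign i a hia w hwbox
            (y a) (x a) (hy a) (hx a) hord
          constructor
          · intro hGi
            have : Θ i (Function.update w a (y a)) ≤ Θ i (Function.update w a (x a)) :=
              hc.2 (by rw [hGi, hGa']; simp)
            rw [← hwold] at this
            exact le_trans this (ih.1 hGi)
          · intro hGi
            have : Θ i (Function.update w a (x a)) ≤ Θ i (Function.update w a (y a)) :=
              hc.1 (by rw [hGi, hGa'])
            rw [← hwold] at this
            exact le_trans (ih.2 hGi) this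
  have := key Finset.univ
  simpa using this

end Theta


section Obj
variable [Fintype I] [DecidableEq I] [DecidableEq ι]

noncomputable def mixR (player : I → ι) (ν : ι) (x y : I → ℤ) : I → ℝ :=
  fun t => ((if player t = ν then y t else x t : ℤ) : ℝ)

noncomputable def objZ (player : I → ι) (ϑ : I → ℝ → ℝ) (Q : I → I → ℝ)
    (Θ : I → (I → ℝ) → ℝ) (ν : ι) (x y : I → ℤ) : ℝ :=
  tgObj player ϑ Q Θ ν (mixR player ν x y)

lemma mixR_block {player : I → ι} {ν : ι} {x y : I → ℤ} {i : I} (hi : player i = ν) :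
    mixR player ν x y i = (y i : ℝ) := by simp [mixR, hi]

lemma mixR_off {player : I → ι} {ν : ι} {x y : I → ℤ} {i : I} (hi : player i ≠ ν) :
    mixR player ν x y i = (x i : ℝ) := by simp [mixR, hi]

-- scalar helpers
lemma kk1 (p q r s : ℝ) : p * r + q * s ≤ max p q * max r s + min p q * min r s := by
  rcases le_total p q with h1 | h1 <;> rcases le_total r s with h2 | h2 <;>
    simp [max_eq_left, max_eq_right, min_eq_left, min_eq_right, h1, h2] <;> nlinarith

lemma kk2 (p q r s : ℝ) : max p q * min r s + min p q * max r s ≤ p * r + q * s := by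
  rcases le_total p q with h1 | h1 <;> rcases le_total r s with h2 | h2 <;>
    simp [max_eq_left, max_eq_right, min_eq_left, min_eq_right, h1, h2] <;> nlinarith

lemma quad_case1 (c p q r s : ℝ) (hc : c ≤ 0) :
    c * max p q * max r s + c * min p q * min r s ≤ c * p * r + c * q * s := by
  have h := kk1 p q r s; nlinarith

lemma quad_case2 (c p q r s : ℝ) (hc : 0 ≤ c) :
    c * max p q * min r s + c * min p q * max r s ≤ c * p * r + c * q * s := by
  have h := kk2 p q r s; nlinarith

lemma objZ_submod (player : I → ι) (ϑ : I → ℝ → ℝ) (Q : I → I → ℝ)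
    (Θ : I → (I → ℝ) → ℝ)
    (hΘdep : ∀ i (x y : I → ℝ),
      (∀ j, player j ≠ player i → x j = y j) → Θ i x = Θ i y)
    (G : I → Bool)
    (hQsign : ∀ i j, i ≠ j → player i = player j →
      ((G i = G j → Q i j ≤ 0) ∧ (G i ≠ G j → 0 ≤ Q i j)))
    (ν : ι) (x a b : I → ℤ) :
    objZ player ϑ Q Θ ν x (vsup G a b) + objZ player ϑ Q Θ ν x (vinf G a b)
      ≤ objZ player ϑ Q Θ ν x a + objZ player ϑ Q Θ ν x b := by
  classical
  set B := univ.filter (fun i => player i = ν) with hB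
  -- Θ values agree across the four mixed profiles
  have hθeq : ∀ i ∈ B, ∀ y y' : I → ℤ,
      Θ i (mixR player ν x y) = Θ i (mixR player ν x y') := by
    intro i hi y y'
    have hpi : player i = ν := by simpa [hB] using hi
    apply hΘdep
    intro j hj
    have hjν : player j ≠ ν := by rw [← hpi]; exact hj
    rw [mixR_off hjν, mixR_off hjν]
  unfold objZ tgObj
  rw [← hB]
  -- linear part equality
  have hlin : ∀ i ∈ B,
      (ϑ i (mixR player ν x (vsup G a b) i) + Θ i (mixR player ν x (vsup G a b)) * mixR player ν x (vsup G a b) i)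
      + (ϑ i (mixR player ν x (vinf G a b) i) + Θ i (mixR player ν x (vinf G a b)) * mixR player ν x (vinf G a b) i)
      = (ϑ i (mixR player ν x a i) + Θ i (mixR player ν x a) * mixR player ν x a i)
      + (ϑ i (mixR player ν x b i) + Θ i (mixR player ν x b) * mixR player ν x b i) := by
    intro i hi
    have hpi : player i = ν := by simpa [hB] using hi
    rw [mixR_block hpi, mixR_block hpi, mixR_block hpi, mixR_block hpi,
        hθeq i hi (vsup G a b) a, hθeq i hi (vinf G a b) a, hθeq i hi b a]
    unfold vsup vinf
    by_cases hg : G i = true <;> rcases le_total (a i) (b i) with hab | hab <;>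
      simp [hg, max_eq_left, max_eq_right, min_eq_left, min_eq_right, hab] <;> push_cast <;> ring
  -- quadratic part inequality
  have hquad : ∀ i ∈ B, ∀ j ∈ B,
      Q i j * mixR player ν x (vsup G a b) i * mixR player ν x (vsup G a b) j
      + Q i j * mixR player ν x (vinf G a b) i * mixR player ν x (vinf G a b) j
      ≤ Q i j * mixR player ν x a i * mixR player ν x a j
      + Q i j * mixR player ν x b i * mixR player ν x b j := by
    intro i hi j hj
    have hpi : player i = ν := by simpa [hB] using hi
    have hpj : player j = ν := by simpa [hB] using hj
    rw [mixR_block hpi, mixR_block hpj, mixR_block hpi, mixR_block hpj,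
        mixR_block hpi, mixR_block hpj, mixR_block hpi, mixR_block hpj]
    by_cases hij : i = j
    · subst hij
      have : ∀ c p q : ℝ, c * max p q * max p q + c * min p q * min p q = c*p*p + c*q*q := by
        intro c p q; rcases le_total p q with h | h <;>
          simp [max_eq_left, max_eq_right, min_eq_left, min_eq_right, h] <;> ring
      unfold vsup vinf
      by_cases hg : G i = true <;> simp only [hg, if_true, if_false, Bool.false_eq_true]
      · push_cast [Int.cast_max, Int.cast_min]; rw [this]
      · push_cast [Int.cast_max, Int.cast_min]
        rcases le_total ((a i : ℝ)) ((b i : ℝ)) with h | h <;>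
          simp [max_eq_left, max_eq_right, min_eq_left, min_eq_right, h] <;> ring_nf <;> linarith
    · have hQ := hQsign i j hij (by rw [hpi, hpj])
      unfold vsup vinf
      by_cases hgi : G i = true <;> by_cases hgj : G j = true <;>
        simp only [hgi, hgj, if_true, if_false, Bool.false_eq_true] <;>
        push_cast [Int.cast_max, Int.cast_min]
      · have hq : Q i j ≤ 0 := hQ.1 (by rw [hgi, hgj])
        exact quad_case1 _ _ _ _ _ hq
      · have hq : 0 ≤ Q i j := hQ.2 (by simp [hgi, hgj])
        exact quad_case2 _ _ _ _ _ hq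
      · have hq : 0 ≤ Q i j := hQ.2 (by simp [hgi, hgj])
        have := quad_case2 (Q i j) ((a i : ℝ)) ((b i : ℝ)) ((a j : ℝ)) ((b j : ℝ)) hq
        linarith
      · have hq : Q i j ≤ 0 := by
          apply hQ.1
          cases hgi' : G i
          · cases hgj' : G j
            · rfl
            · exact absurd hgj' hgj
          · exact absurd hgi' hgi
        have := quad_case1 (Q i j) ((a i : ℝ)) ((b i : ℝ)) ((a j : ℝ)) ((b j : ℝ)) hq
        linarith
  -- assemble
  have hlinsum : (∑ i ∈ B, (ϑ i (mixR player ν x (vsup G a b) i) + Θ i (mixR player ν x (vsup G a b)) * mixR player ν x (vsup G a b) i))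
      + (∑ i ∈ B, (ϑ i (mixR player ν x (vinf G a b) i) + Θ i (mixR player ν x (vinf G a b)) * mixR player ν x (vinf G a b) i))
      = (∑ i ∈ B, (ϑ i (mixR player ν x a i) + Θ i (mixR player ν x a) * mixR player ν x a i))
      + (∑ i ∈ B, (ϑ i (mixR player ν x b i) + Θ i (mixR player ν x b) * mixR player ν x b i)) := by
    rw [← Finset.sum_add_distrib, ← Finset.sum_add_distrib]
    exact Finset.sum_congr rfl hlin
  have hquadsum : (∑ i ∈ B, ∑ j ∈ B, Q i j * mixR player ν x (vsup G a b) i * mixR player ν x (vsup G a b) j)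
      + (∑ i ∈ B, ∑ j ∈ B, Q i j * mixR player ν x (vinf G a b) i * mixR player ν x (vinf G a b) j)
      ≤ (∑ i ∈ B, ∑ j ∈ B, Q i j * mixR player ν x a i * mixR player ν x a j)
      + (∑ i ∈ B, ∑ j ∈ B, Q i j * mixR player ν x b i * mixR player ν x b j) := by
    rw [← Finset.sum_add_distrib, ← Finset.sum_add_distrib]
    apply Finset.sum_le_sum
    intro i hi
    rw [← Finset.sum_add_distrib, ← Finset.sum_add_distrib]
    apply Finset.sum_le_sum
    intro j hj
    exact hquad i hi j hj
  have h2 : (0:ℝ) < 1/2 := by norm_num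
  nlinarith [hquadsum, hlinsum]

end Obj

section DD
variable [Fintype I] [DecidableEq I] [DecidableEq ι]

lemma objZ_dd (player : I → ι) (l u : I → ℤ) (ϑ : I → ℝ → ℝ) (Q : I → I → ℝ)
    (Θ : I → (I → ℝ) → ℝ)
    (hΘdep : ∀ i (x y : I → ℝ),
      (∀ j, player j ≠ player i → x j = y j) → Θ i x = Θ i y)
    (hΘdiff : ∀ i, Differentiable ℝ (Θ i)) (G : I → Bool)
    (hΘsign : ∀ i j, player i ≠ player j → ∀ x : I → ℝ,
      (∀ t, (l t : ℝ) ≤ x t ∧ x t ≤ (u t : ℝ)) →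
      ((G i = G j → deriv (fun s => Θ i (Function.update x j s)) (x j) ≤ 0) ∧
       (G i ≠ G j → 0 ≤ deriv (fun s => Θ i (Function.update x j s)) (x j))))
    (ν : ι) (x x' a b : I → ℤ)
    (hx : inBox l u x) (hx' : inBox l u x') (ha : inBox l u a) (hb : inBox l u b)
    (hxx' : vle G x x') (hba : vle G b a) :
    objZ player ϑ Q Θ ν x' a + objZ player ϑ Q Θ ν x b
      ≤ objZ player ϑ Q Θ ν x a + objZ player ϑ Q Θ ν x' b := by
  classical
  set B := univ.filter (fun i => player i = ν) with hB
  -- Θ values depend only on the opponent part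
  have hθeq : ∀ i ∈ B, ∀ z : I → ℤ, ∀ y y' : I → ℤ,
      Θ i (mixR player ν z y) = Θ i (mixR player ν z y') := by
    intro i hi z y y'
    have hpi : player i = ν := by simpa [hB] using hi
    apply hΘdep
    intro j hj
    have hjν : player j ≠ ν := by rw [← hpi]; exact hj
    rw [mixR_off hjν, mixR_off hjν]
  -- Θ comparison between x and x'
  have hmix_box : ∀ z y : I → ℤ, inBox l u z → inBox l u y → inBoxR l u (mixR player ν z y) := by
    intro z y hz hy t
    by_cases hp : player t = ν
    · rw [mixR_block hp]; exact ⟨by exact_mod_cast (hy t).1, by exact_mod_cast (hy t).2⟩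
    · rw [mixR_off hp]; exact ⟨by exact_mod_cast (hz t).1, by exact_mod_cast (hz t).2⟩
  have hθcmp : ∀ i ∈ B,
      (G i = true → Θ i (mixR player ν x' a) ≤ Θ i (mixR player ν x a)) ∧
      (G i = false → Θ i (mixR player ν x a) ≤ Θ i (mixR player ν x' a)) := by
    intro i hi
    apply theta_mono player l u Θ hΘdep hΘdiff G hΘsign i
      (mixR player ν x a) (mixR player ν x' a)
      (hmix_box x a hx ha) (hmix_box x' a hx' ha)
    intro j
    by_cases hp : player j = ν
    · rw [mixR_block hp, mixR_block hp]
      exact ⟨fun _ => le_refl _, fun _ => le_refl _⟩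
    · rw [mixR_off hp, mixR_off hp]
      rcases hxx' j with ⟨h1, h2⟩
      exact ⟨fun hg => by exact_mod_cast h1 hg, fun hg => by exact_mod_cast h2 hg⟩
  unfold objZ tgObj
  rw [← hB]
  -- quadratic parts: depend only on block coordinates of second arg
  have hquad : ∀ z z' y : I → ℤ,
      (∑ i ∈ B, ∑ j ∈ B, Q i j * mixR player ν z y i * mixR player ν z y j)
      = (∑ i ∈ B, ∑ j ∈ B, Q i j * mixR player ν z' y i * mixR player ν z' y j) := by
    intro z z' y
    apply Finset.sum_congr rfl; intro i hi
    apply Finset.sum_congr rfl; intro j hj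
    have hpi : player i = ν := by simpa [hB] using hi
    have hpj : player j = ν := by simpa [hB] using hj
    rw [mixR_block hpi, mixR_block hpj, mixR_block hpi, mixR_block hpj]
  have hq1 := hquad x' x a
  have hq2 := hquad x' x b
  -- linear sums
  have hlsum : ∀ z y : I → ℤ,
      (∑ i ∈ B, (ϑ i (mixR player ν z y i) + Θ i (mixR player ν z y) * mixR player ν z y i))
      = ∑ i ∈ B, (ϑ i ((y i : ℝ)) + Θ i (mixR player ν z a) * (y i : ℝ)) := by
    intro z y
    apply Finset.sum_congr rfl; intro i hi
    have hpi : player i = ν := by simpa [hB] using hi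
    rw [mixR_block hpi, hθeq i hi z y a]
  rw [hlsum x' a, hlsum x b, hlsum x a, hlsum x' b, hq1, hq2]
  have hkey : (∑ i ∈ B, (ϑ i ((a i : ℝ)) + Θ i (mixR player ν x' a) * (a i : ℝ)))
      + (∑ i ∈ B, (ϑ i ((b i : ℝ)) + Θ i (mixR player ν x a) * (b i : ℝ)))
      ≤ (∑ i ∈ B, (ϑ i ((a i : ℝ)) + Θ i (mixR player ν x a) * (a i : ℝ)))
      + (∑ i ∈ B, (ϑ i ((b i : ℝ)) + Θ i (mixR player ν x' a) * (b i : ℝ))) := by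
    rw [← Finset.sum_add_distrib, ← Finset.sum_add_distrib]
    apply Finset.sum_le_sum
    intro i hi
    rcases hθcmp i hi with ⟨hc1, hc2⟩
    rcases hba i with ⟨hab1, hab2⟩
    cases hg : G i with
    | true =>
      have h1 := hc1 hg
      have h2 : (b i : ℝ) ≤ (a i : ℝ) := by exact_mod_cast hab1 hg
      nlinarith
    | false =>
      have h1 := hc2 hg
      have h2 : (a i : ℝ) ≤ (b i : ℝ) := by exact_mod_cast hab2 hg
      nlinarith
  linarith

end DD

section Sel
variable [Fintype I] [DecidableEq I] [DecidableEq ι]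

lemma exists_greatest (G : I → Bool) (A : Finset (I → ℤ)) (hne : A.Nonempty)
    (hcl : ∀ a ∈ A, ∀ b ∈ A, vsup G a b ∈ A) :
    ∃ m ∈ A, ∀ a ∈ A, vle G a m := by
  obtain ⟨m, hm, hmax⟩ := A.exists_max_image (phiG G) hne
  refine ⟨m, hm, ?_⟩
  intro a ha
  have hsup := hcl m hm a ha
  have h1 : vle G m (vsup G m a) := vle_vsup_left G m a
  have h2 : phiG G (vsup G m a) ≤ phiG G m := hmax _ hsup
  have heq : m = vsup G m a := eq_of_vle_of_phi_le h1 h2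
  have h3 := vle_vsup_right G m a
  rw [← heq] at h3
  exact h3

lemma exists_gsel (player : I → ι) (l u : I → ℤ) (hlu : ∀ j, l j ≤ u j)
    (ϑ : I → ℝ → ℝ) (Q : I → I → ℝ) (Θ : I → (I → ℝ) → ℝ)
    (hΘdep : ∀ i (x y : I → ℝ),
      (∀ j, player j ≠ player i → x j = y j) → Θ i x = Θ i y)
    (G : I → Bool)
    (hQsign : ∀ i j, i ≠ j → player i = player j →
      ((G i = G j → Q i j ≤ 0) ∧ (G i ≠ G j → 0 ≤ Q i j)))
    (ν : ι) (x : I → ℤ) :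
    ∃ g : I → ℤ, inBox l u g ∧
      (∀ y, inBox l u y → objZ player ϑ Q Θ ν x g ≤ objZ player ϑ Q Θ ν x y) ∧
      (∀ a, inBox l u a →
        (∀ y, inBox l u y → objZ player ϑ Q Θ ν x a ≤ objZ player ϑ Q Θ ν x y) →
        vle G a g) := by
  classical
  set S : Finset (I → ℤ) := Fintype.piFinset (fun i => Finset.Icc (l i) (u i)) with hS
  have hmem : ∀ y : I → ℤ, y ∈ S ↔ inBox l u y := by
    intro y
    rw [hS, Fintype.mem_piFinset]
    constructor
    · intro hh j; exact Finset.mem_Icc.mp (hh j)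
    · intro hh j; exact Finset.mem_Icc.mpr (hh j)
  have hSne : S.Nonempty := ⟨l, (hmem l).mpr (fun j => ⟨le_refl _, hlu j⟩)⟩
  set A : Finset (I → ℤ) :=
    S.filter (fun y => ∀ z ∈ S, objZ player ϑ Q Θ ν x y ≤ objZ player ϑ Q Θ ν x z) with hA
  have hAne : A.Nonempty := by
    obtain ⟨m0, hm0, hmin⟩ := S.exists_min_image (objZ player ϑ Q Θ ν x) hSne
    exact ⟨m0, by rw [hA, Finset.mem_filter]; exact ⟨hm0, hmin⟩⟩
  have hAmem : ∀ y, y ∈ A ↔ (y ∈ S ∧ ∀ z ∈ S, objZ player ϑ Q Θ ν x y ≤ objZ player ϑ Q Θ ν x z) := by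
    intro y; rw [hA, Finset.mem_filter]
  have hcl : ∀ a ∈ A, ∀ b ∈ A, vsup G a b ∈ A := by
    intro a ha b hb
    rw [hAmem] at ha hb ⊢
    have hsupS : vsup G a b ∈ S := (hmem _).mpr (vsup_inBox ((hmem _).mp ha.1) ((hmem _).mp hb.1))
    have hinfS : vinf G a b ∈ S := (hmem _).mpr (vinf_inBox ((hmem _).mp ha.1) ((hmem _).mp hb.1))
    have hsm := objZ_submod player ϑ Q Θ hΘdep G hQsign ν x a b
    have h1 : objZ player ϑ Q Θ ν x a ≤ objZ player ϑ Q Θ ν x (vinf G a b) := ha.2 _ hinfS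
    have h2 : objZ player ϑ Q Θ ν x (vsup G a b) ≤ objZ player ϑ Q Θ ν x b := by linarith
    refine ⟨hsupS, ?_⟩
    intro z hz
    exact le_trans h2 (hb.2 z hz)
  obtain ⟨m, hmA, hmmax⟩ := exists_greatest G A hAne hcl
  rw [hAmem] at hmA
  refine ⟨m, (hmem _).mp hmA.1, ?_, ?_⟩
  · intro y hy; exact hmA.2 y ((hmem _).mpr hy)
  · intro a ha haopt
    apply hmmax
    rw [hAmem]
    exact ⟨(hmem _).mpr ha, fun z hz => haopt z ((hmem _).mp hz)⟩

lemma topkis (player : I → ι) (l u : I → ℤ) (ϑ : I → ℝ → ℝ) (Q : I → I → ℝ)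
    (Θ : I → (I → ℝ) → ℝ)
    (hΘdep : ∀ i (x y : I → ℝ),
      (∀ j, player j ≠ player i → x j = y j) → Θ i x = Θ i y)
    (hΘdiff : ∀ i, Differentiable ℝ (Θ i)) (G : I → Bool)
    (hQsign : ∀ i j, i ≠ j → player i = player j →
      ((G i = G j → Q i j ≤ 0) ∧ (G i ≠ G j → 0 ≤ Q i j)))
    (hΘsign : ∀ i j, player i ≠ player j → ∀ x : I → ℝ,
      (∀ t, (l t : ℝ) ≤ x t ∧ x t ≤ (u t : ℝ)) →
      ((G i = G j → deriv (fun s => Θ i (Function.update x j s)) (x j) ≤ 0) ∧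
       (G i ≠ G j → 0 ≤ deriv (fun s => Θ i (Function.update x j s)) (x j))))
    (ν : ι) (x x' : I → ℤ) (hx : inBox l u x) (hx' : inBox l u x') (hxx' : vle G x x')
    (a g' : I → ℤ) (ha : inBox l u a)
    (haopt : ∀ y, inBox l u y → objZ player ϑ Q Θ ν x a ≤ objZ player ϑ Q Θ ν x y)
    (hg' : inBox l u g')
    (hg'max : ∀ c, inBox l u c →
      (∀ y, inBox l u y → objZ player ϑ Q Θ ν x' c ≤ objZ player ϑ Q Θ ν x' y) →
      vle G c g')
    (hg'opt : ∀ y, inBox l u y → objZ player ϑ Q Θ ν x' g' ≤ objZ player ϑ Q Θ ν x' y) :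
    vle G a g' := by
  have hsbox : inBox l u (vsup G a g') := vsup_inBox ha hg'
  have hibox : inBox l u (vinf G a g') := vinf_inBox ha hg'
  have hsm := objZ_submod player ϑ Q Θ hΘdep G hQsign ν x' a g'
  have hdd := objZ_dd player l u ϑ Q Θ hΘdep hΘdiff G hΘsign ν x x' a (vinf G a g')
    hx hx' ha hibox hxx' (vinf_vle_left G a g')
  have h0 : objZ player ϑ Q Θ ν x a ≤ objZ player ϑ Q Θ ν x (vinf G a g') := haopt _ hibox
  have hsup_opt : ∀ y, inBox l u y →
      objZ player ϑ Q Θ ν x' (vsup G a g') ≤ objZ player ϑ Q Θ ν x' y := by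
    intro y hy
    have h1 : objZ player ϑ Q Θ ν x' (vsup G a g') ≤ objZ player ϑ Q Θ ν x' g' := by linarith
    exact le_trans h1 (hg'opt y hy)
  have hvle := hg'max _ hsbox hsup_opt
  exact vle_trans (vle_vsup_left G a g') hvle

lemma mono_int_stab (f : ℕ → ℤ) (hf : ∀ k, f k ≤ f (k + 1)) (M : ℤ) (hM : ∀ k, f k ≤ M) :
    ∃ K, ∀ k, K ≤ k → f k = f K := by
  by_contra hcon
  push_neg at hcon
  have hmono : ∀ a b, a ≤ b → f a ≤ f b := by
    intro a b hab
    induction b with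
    | zero =>
      have : a = 0 := by omega
      subst this; exact le_refl _
    | succ b ih =>
      rcases Nat.lt_or_ge a (b+1) with hh | hh
      · exact le_trans (ih (by omega)) (hf b)
      · have : a = b + 1 := by omega
        subst this; exact le_refl _
  have hstep : ∀ K : ℕ, ∃ k, K ≤ k ∧ f K + 1 ≤ f k := by
    intro K
    obtain ⟨k, hk1, hk2⟩ := hcon K
    refine ⟨k, hk1, ?_⟩
    have := hmono K k hk1
    omega
  have hgrow : ∀ n : ℕ, ∃ k, f 0 + n ≤ f k := by
    intro n
    induction n with
    | zero => exact ⟨0, by omega⟩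
    | succ n ih =>
      obtain ⟨k, hk⟩ := ih
      obtain ⟨k', hk1, hk2⟩ := hstep k
      exact ⟨k', by push_cast at hk2 ⊢; omega⟩
  obtain ⟨k, hk⟩ := hgrow ((M - f 0).toNat + 1)
  have := hM k
  have h0 := hM 0
  omega

end Sel

section Congr
variable [Fintype I] [DecidableEq I] [DecidableEq ι]

lemma objZ_congr_block (player : I → ι) (ϑ : I → ℝ → ℝ) (Q : I → I → ℝ)
    (Θ : I → (I → ℝ) → ℝ) (ν : ι) (x y y' : I → ℤ)
    (hyy' : ∀ j, player j = ν → y j = y' j) :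
    objZ player ϑ Q Θ ν x y = objZ player ϑ Q Θ ν x y' := by
  unfold objZ
  congr 1
  funext t
  unfold mixR
  by_cases hp : player t = ν
  · simp [hp, hyy' t hp]
  · simp [hp]

end Congr

/-- Theorem 3 (Jacobi convergence): for a 2-groups partitionable discrete NEP
with nonempty bounded box feasible set, starting from the group-wise corner
(`l` on `G₁`, `u` on `G₂`) and given any schedule `J` in which every player
plays at least once in every window of `h+1` consecutive iterations, there is
a run of the Jacobi-type best-response method (non-playing players keep their
strategy, playing players move to a best response, with ties broken so that
`G₁`-coordinates never decrease and `G₂`-coordinates never increase) that is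
coordinatewise monotone and reaches, in finitely many iterations, an
equilibrium of the discrete NEP at which it stabilizes. -/
theorem stmt11 [Fintype I] [DecidableEq I] [DecidableEq ι]
    (player : I → ι) (l u : I → ℤ) (hlu : ∀ j, l j ≤ u j)
    (ϑ : I → ℝ → ℝ) (Q : I → I → ℝ) (Θ : I → (I → ℝ) → ℝ)
    (hΘdep : ∀ i (x y : I → ℝ),
      (∀ j, player j ≠ player i → x j = y j) → Θ i x = Θ i y)
    (hΘcc : ∀ i, ConvexOn ℝ Set.univ (Θ i) ∨ ConcaveOn ℝ Set.univ (Θ i))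
    (hΘdiff : ∀ i, Differentiable ℝ (Θ i))
    (hQsym : ∀ i j, player i = player j → Q i j = Q j i)
    (G : I → Bool)
    (hQsign : ∀ i j, i ≠ j → player i = player j →
      ((G i = G j → Q i j ≤ 0) ∧ (G i ≠ G j → 0 ≤ Q i j)))
    (hΘsign : ∀ i j, player i ≠ player j → ∀ x : I → ℝ,
      (∀ t, (l t : ℝ) ≤ x t ∧ x t ≤ (u t : ℝ)) →
      ((G i = G j → deriv (fun s => Θ i (Function.update x j s)) (x j) ≤ 0) ∧
       (G i ≠ G j → 0 ≤ deriv (fun s => Θ i (Function.update x j s)) (x j))))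
    (J : ℕ → ι → Prop) (h : ℕ)
    (hcov : ∀ k ν, ∃ t, k ≤ t ∧ t ≤ k + h ∧ J t ν) :
    ∃ x : ℕ → I → ℤ,
      (∀ i, x 0 i = if G i then l i else u i) ∧
      (∀ k j, l j ≤ x k j ∧ x k j ≤ u j) ∧
      (∀ k ν, ¬ J k ν → ∀ i, player i = ν → x (k + 1) i = x k i) ∧
      (∀ k ν, J k ν →
        ∀ y : I → ℤ, (∀ j, l j ≤ y j ∧ y j ≤ u j) →
          (∀ j, player j ≠ ν → y j = x k j) →
          tgObj player ϑ Q Θ ν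
              (fun j => ((if player j = ν then x (k + 1) j else x k j : ℤ) : ℝ))
            ≤ tgObj player ϑ Q Θ ν (fun t => (y t : ℝ))) ∧
      (∀ k i, (G i = true → x k i ≤ x (k + 1) i) ∧
              (G i = false → x (k + 1) i ≤ x k i)) ∧
      ∃ K, tgIsEq player ϑ Q Θ l u (x K) ∧ ∀ k, K ≤ k → x k = x K := by

  classical
  -- the greatest-best-response selection
  choose gs hgsbox hgsopt hgsmax using
    (fun (ν : ι) (x : I → ℤ) =>
      exists_gsel player l u hlu ϑ Q Θ hΘdep G hQsign ν x)
  -- the run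
  let z : ℕ → I → ℤ := fun k => Nat.rec (fun i => if G i then l i else u i)
    (fun k zk => fun i => if J k (player i) then gs (player i) zk i else zk i) k
  have hz0 : ∀ i, z 0 i = if G i then l i else u i := fun _ => rfl
  have hzs : ∀ k i, z (k + 1) i =
      if J k (player i) then gs (player i) (z k) i else z k i := fun _ _ => rfl
  have hbox : ∀ k, inBox l u (z k) := by
    intro k
    induction k with
    | zero =>
      intro j; rw [hz0]
      have := hlu j
      by_cases hg : G j = true <;> simp [hg] <;> omega
    | succ k ih =>
      intro j; rw [hzs]
      by_cases hJ : J k (player j)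
      · rw [if_pos hJ]; exact hgsbox (player j) (z k) j
      · rw [if_neg hJ]; exact ih j
  -- invariant: each coordinate is dominated by the best response at the current point
  have hInvmono : ∀ k,
      (∀ i, (G i = true → z k i ≤ gs (player i) (z k) i) ∧
            (G i = false → gs (player i) (z k) i ≤ z k i)) →
      vle G (z k) (z (k + 1)) := by
    intro k hInv i
    rw [hzs]
    by_cases hJ : J k (player i)
    · rw [if_pos hJ]
      exact hInv i
    · rw [if_neg hJ]
      exact ⟨fun _ => le_refl _, fun _ => le_refl _⟩
  have hInv : ∀ k, ∀ i, (G i = true → z k i ≤ gs (player i) (z k) i) ∧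
            (G i = false → gs (player i) (z k) i ≤ z k i) := by
    intro k
    induction k with
    | zero =>
      intro i
      refine ⟨?_, ?_⟩ <;> intro hg
      · have hb := (hgsbox (player i) (z 0) i).1
        rw [hz0 i, hg]; simpa using hb
      · have hb := (hgsbox (player i) (z 0) i).2
        rw [hz0 i, hg]; simpa using hb
    | succ k ih =>
      have hm : vle G (z k) (z (k + 1)) := hInvmono k ih
      intro i
      set ν := player i with hν
      have htop : vle G (gs ν (z k)) (gs ν (z (k + 1))) :=
        topkis player l u ϑ Q Θ hΘdep hΘdiff G hQsign hΘsign ν (z k) (z (k+1))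
          (hbox k) (hbox (k+1)) hm (gs ν (z k)) (gs ν (z (k+1)))
          (hgsbox ν (z k)) (hgsopt ν (z k))
          (hgsbox ν (z (k+1))) (hgsmax ν (z (k+1))) (hgsopt ν (z (k+1)))
      constructor <;> intro hg
      · rw [hzs]
        by_cases hJ : J k (player i)
        · rw [if_pos hJ]; exact (htop i).1 hg
        · rw [if_neg hJ]
          exact le_trans ((ih i).1 hg) ((htop i).1 hg)
      · rw [hzs]
        by_cases hJ : J k (player i)
        · rw [if_pos hJ]; exact (htop i).2 hg
        · rw [if_neg hJ]
          exact le_trans ((htop i).2 hg) ((ih i).2 hg)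
  have hmono : ∀ k, vle G (z k) (z (k + 1)) := fun k => hInvmono k (hInv k)
  -- stabilization
  have hφb : ∀ k, phiG G (z k) ≤ ∑ i, (if G i then u i else - l i) := by
    intro k
    apply Finset.sum_le_sum
    intro i _
    rcases hbox k i with ⟨h1, h2⟩
    by_cases hg : G i = true <;> simp [hg] <;> omega
  obtain ⟨K, hK⟩ := mono_int_stab (fun k => phiG G (z k))
    (fun k => phiG_mono (hmono k)) _ hφb
  have hzstab : ∀ k, K ≤ k → z k = z K := by
    intro k hk
    induction k with
    | zero =>
      have : K = 0 := by omega
      rw [this]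
    | succ k ih =>
      rcases Nat.lt_or_ge K (k+1) with hh | hh
      · have hkk : K ≤ k := by omega
        have h1 : z (k+1) = z k := by
          symm
          apply eq_of_vle_of_phi_le (hmono k)
          have e1 := hK k hkk
          have e2 := hK (k+1) (by omega)
          omega
        rw [h1, ih hkk]
      · have : K = k + 1 := by omega
        rw [this]
  -- main answer
  refine ⟨z, hz0, fun k j => hbox k j, ?_, ?_, fun k i => hmono k i, K, ?_, hzstab⟩
  · -- non-playing players stay
    intro k ν hJ i hpi
    rw [hzs, if_neg (by rw [hpi]; exact hJ)]
  · -- best-response property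
    intro k ν hJ y hy hagree
    have e1 : (fun j => ((if player j = ν then z (k + 1) j else z k j : ℤ) : ℝ))
        = mixR player ν (z k) (gs ν (z k)) := by
      funext j
      unfold mixR
      by_cases hp : player j = ν
      · rw [if_pos hp, if_pos hp, hzs, if_pos (by rw [hp]; exact hJ), hp]
      · rw [if_neg hp, if_neg hp]
    have e2 : (fun t => ((y t : ℤ) : ℝ)) = mixR player ν (z k) y := by
      funext t
      unfold mixR
      by_cases hp : player t = ν
      · rw [if_pos hp]
      · rw [if_neg hp, hagree t hp]
    show tgObj player ϑ Q Θ ν _ ≤ tgObj player ϑ Q Θ ν _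
    rw [e1, e2]
    exact hgsopt ν (z k) y hy
  · -- equilibrium at z K
    constructor
    · exact fun j => hbox K j
    · intro ν y hy hagree
      obtain ⟨t, ht1, ht2, htJ⟩ := hcov K ν
      have hzt : z t = z K := hzstab t ht1
      have hzt1 : z (t + 1) = z K := hzstab (t + 1) (by omega)
      -- gs ν (z K) agrees with z K on the block
      have hgseq : ∀ j, player j = ν → gs ν (z K) j = z K j := by
        intro j hpj
        have := hzs t j
        rw [if_pos (by rw [hpj]; exact htJ), hzt, hpj] at this
        rw [← this, hzt1]
      have e0 : (fun t' : I => (Int.cast (z K t') : ℝ)) = mixR player ν (z K) (z K) := by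
        funext t'
        unfold mixR
        by_cases hp : player t' = ν <;> simp [hp]
      have e2 : (fun t' => ((y t' : ℤ) : ℝ)) = mixR player ν (z K) y := by
        funext t'
        unfold mixR
        by_cases hp : player t' = ν
        · rw [if_pos hp]
        · rw [if_neg hp, hagree t' hp]
      show tgObj player ϑ Q Θ ν _ ≤ tgObj player ϑ Q Θ ν _
      rw [e0, e2]
      have hcongr : objZ player ϑ Q Θ ν (z K) (z K) = objZ player ϑ Q Θ ν (z K) (gs ν (z K)) :=
        objZ_congr_block player ϑ Q Θ ν (z K) (z K) (gs ν (z K))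
          (fun j hpj => (hgseq j hpj).symm)
      show objZ player ϑ Q Θ ν (z K) (z K) ≤ objZ player ϑ Q Θ ν (z K) y
      rw [hcongr]
      exact hgsopt ν (z K) y hy
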